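/- Let p(n) satisfy c_l(n) := n^d(1+ld)p(n)/d! - log n - l log log n → +∞. Then for any function f(n) ≫ n^{ld/(1+ld)} (log n)^{-l/(1+ld)}, a.a.s. the number μ of vertices outside the largest component of G^{d+1}(n,p) satisfies μ < f(n). -/

import Mathlib

open Finset Filter Asymptotics

noncomputable section
open scoped Classical

/-- The type of potential edges of a `(d+1)`-uniform hypergraph on `n` vertices. -/
abbrev Edge (d n : ℕ) := {s : Finset (Fin n) // s.card = d + 1}

/-- Probability of an event in the binomial random `(d+1)`-uniform hypergraph `G^{d+1}(n,p)`. -/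
def hprob (d n : ℕ) (p : ℝ) (P : Finset (Edge d n) → Prop) : ℝ :=
  ∑ H : Finset (Edge d n),
    if P H then p ^ H.card * (1 - p) ^ (Fintype.card (Edge d n) - H.card) else 0

/-- Expectation of a random variable on `G^{d+1}(n,p)`. -/
def hexp (d n : ℕ) (p : ℝ) (X : Finset (Edge d n) → ℝ) : ℝ :=
  ∑ H : Finset (Edge d n),
    p ^ H.card * (1 - p) ^ (Fintype.card (Edge d n) - H.card) * X H

/-- Two vertices are adjacent if they are distinct and share an edge. -/
def eadj {d n : ℕ} (H : Finset (Edge d n)) (x y : Fin n) : Prop :=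
  x ≠ y ∧ ∃ e ∈ H, x ∈ e.1 ∧ y ∈ e.1

/-- The connected component of a vertex, as a finset. -/
def ecomp {d n : ℕ} (H : Finset (Edge d n)) (x : Fin n) : Finset (Fin n) :=
  Finset.univ.filter fun y => Relation.ReflTransGen (eadj H) x y

/-- The hypergraph is connected. -/
def econn {d n : ℕ} (H : Finset (Edge d n)) : Prop :=
  ∀ x y : Fin n, Relation.ReflTransGen (eadj H) x y

/-- The incidence graph of a hypergraph (a bipartite graph between vertices and edges);
Berge-acyclicity means this graph is acyclic. -/
def einc {d n : ℕ} (H : Finset (Edge d n)) : SimpleGraph (Fin n ⊕ Edge d n) where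
  Adj a b := (∃ v e, a = Sum.inl v ∧ b = Sum.inr e ∧ e ∈ H ∧ v ∈ e.1) ∨
             (∃ v e, b = Sum.inl v ∧ a = Sum.inr e ∧ e ∈ H ∧ v ∈ e.1)
  symm := ⟨fun a b h => h.symm⟩
  loopless := ⟨by rintro a (⟨v, e, rfl, h2, -⟩ | ⟨v, e, rfl, h2, -⟩) <;> simp at h2⟩

/-- The image of an edge under an injection of vertex sets. -/
def mapEdge {d v n : ℕ} (f : Fin v ↪ Fin n) (e : Edge d v) : Edge d n :=
  ⟨e.1.map f, by rw [Finset.card_map]; exact e.2⟩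

/-- A butterfly of order `l`: a connected Berge-acyclic `(d+1)`-uniform hypergraph with `l`
edges, on its `1 + l*d` vertices. -/
def IsButterfly (d l : ℕ) (K : Finset (Edge d (1 + l * d))) : Prop :=
  K.card = l ∧ (∀ x y : Fin (1 + l * d), Relation.ReflTransGen (eadj K) x y) ∧
    (einc K).IsAcyclic

/-- The degree of a vertex: the number of edges containing it. -/
def edeg {d n : ℕ} (H : Finset (Edge d n)) (x : Fin n) : ℕ :=
  (H.filter fun e => x ∈ e.1).card

/-- `f` embeds `K` as a connected-component copy in `H`: all edges of `K` are present
and no edge of `H` meets the image except images of edges of `K`. -/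
def IsCompCopy {d v n : ℕ} (K : Finset (Edge d v)) (H : Finset (Edge d n))
    (f : Fin v ↪ Fin n) : Prop :=
  (∀ e ∈ K, mapEdge f e ∈ H) ∧
    ∀ e ∈ H, (∃ i, f i ∈ e.1) → ∃ e' ∈ K, e = mapEdge f e'

/-- The number of connected components of `H` isomorphic to `K`. -/
def numCompCopies {d v n : ℕ} (K : Finset (Edge d v)) (H : Finset (Edge d n)) : ℕ :=
  ((Finset.univ : Finset (Finset (Fin n))).filter fun s =>
    ∃ f : Fin v ↪ Fin n, IsCompCopy K H f ∧ Finset.univ.map f = s).card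

/-- Two hypergraphs on the same labelled vertex set are isomorphic. -/
def EquivHyper {d v : ℕ} (K K' : Finset (Edge d v)) : Prop :=
  ∃ g : Fin v ≃ Fin v, ∀ e : Edge d v, e ∈ K ↔ mapEdge g.toEmbedding e ∈ K'

/-- The number of hypergraphs on `v` labelled vertices isomorphic to `K`. -/
def countType {d v : ℕ} (K : Finset (Edge d v)) : ℕ :=
  ((Finset.univ : Finset (Finset (Edge d v))).filter fun K' => EquivHyper K' K).card

/-- The number of vertices of the largest connected component. -/
def giantSize {d n : ℕ} (H : Finset (Edge d n)) : ℕ :=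
  Finset.univ.sup fun x : Fin n => (ecomp H x).card

/-- `μ`: the number of vertices outside the largest connected component. -/
def mu {d n : ℕ} (H : Finset (Edge d n)) : ℕ := n - giantSize H

/-- An edge of a Berge-acyclic hypergraph is a leaf if it is incident to exactly one
other edge. -/
def IsLeaf {d v : ℕ} (K : Finset (Edge d v)) (e : Edge d v) : Prop :=
  e ∈ K ∧ (K.filter fun e' => e' ≠ e ∧ (e'.1 ∩ e.1).Nonempty).card = 1

/-- A `v*`-marked `l`-butterfly `(K, M)` is minimal if every leaf edge contains a marked
vertex. -/
def IsMinimalMarked {d v : ℕ} (K : Finset (Edge d v)) (M : Finset (Fin v)) : Prop :=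
  ∀ e ∈ K, IsLeaf K e → ∃ x ∈ e.1, x ∈ M

/-- The number of copies of the marked butterfly `(K, M)` in `H`: not-necessarily-induced
sub-hypergraphs isomorphic to `K` in which each marked vertex has the same degree in `H`
as in `K`. Copies are counted by their (edge set, marked vertex set) pair. -/
def numMarkedCopies {d v n : ℕ} (K : Finset (Edge d v)) (M : Finset (Fin v))
    (H : Finset (Edge d n)) : ℕ :=
  Set.ncard {q : Finset (Edge d n) × Finset (Fin n) |
    ∃ f : Fin v ↪ Fin n, (∀ e ∈ K, mapEdge f e ∈ H) ∧
      (∀ x ∈ M, edeg H (f x) = edeg K x) ∧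
      q.1 = K.image (mapEdge f) ∧ q.2 = M.map f}

/-- Two marked hypergraphs on the same labelled vertex set are isomorphic. -/
def EquivMarked {d v : ℕ} (K K' : Finset (Edge d v)) (M M' : Finset (Fin v)) : Prop :=
  ∃ g : Fin v ≃ Fin v, (∀ e : Edge d v, e ∈ K ↔ mapEdge g.toEmbedding e ∈ K') ∧
    M.map g.toEmbedding = M'

/-- The number of marked hypergraphs on `v` labelled vertices isomorphic to `(K, M)`. -/
def countMarkedType {d v : ℕ} (K : Finset (Edge d v)) (M : Finset (Fin v)) : ℕ :=
  ((Finset.univ : Finset (Finset (Edge d v) × Finset (Fin v))).filter fun q =>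
    EquivMarked q.1 K q.2 M).card

/-- The ball of radius `r` around a vertex in the hypergraph distance. -/
def hball {d n : ℕ} (H : Finset (Edge d n)) (x : Fin n) : ℕ → Finset (Fin n)
  | 0 => {x}
  | r + 1 => hball H x r ∪ Finset.univ.filter fun y => ∃ z ∈ hball H x r, eadj H z y


/-!
First-moment argument. If `μ ≥ s₀`, then some union `S` of components has `s₀ ≤ |S| ≤ n/2`:
the complement of the giant component, the giant component itself, or (when all components
are smaller than `s₀`) a greedily chosen union of components. No edge of `H` has exactly one
vertex in such an `S`, and there are at least `|S| C(n-|S|, d)` such potential edges, so this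
happens with probability at most `exp (-p |S| C(n-|S|, d))`. For `s` above
`e^{2+8d} n^{ld/(1+ld)} (log n)^{-l/(1+ld)}` the hypothesis on `p` gives
`p C(n-s, d) ≥ 2 + log (n/s)`, and together with `C(n, s) ≤ (en/s)^s` the union bound over all
such `S` is at most `∑_{s ≥ s₀} e^{-s} ≤ 2 e^{-s₀} → 0`.
-/

open Real

section Probability
variable {d n : ℕ} {p : ℝ}

def hweight (d n : ℕ) (p : ℝ) (H : Finset (Edge d n)) : ℝ :=
  p ^ H.card * (1 - p) ^ (Fintype.card (Edge d n) - H.card)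

lemma hweight_nonneg (hp0 : 0 ≤ p) (hp1 : p ≤ 1) (H : Finset (Edge d n)) :
    0 ≤ hweight d n p H :=
  mul_nonneg (pow_nonneg hp0 _) (pow_nonneg (sub_nonneg.2 hp1) _)

lemma hprob_eq_sum_filter (P : Finset (Edge d n) → Prop) :
    hprob d n p P = ∑ H ∈ univ.filter P, hweight d n p H :=
  (sum_filter _ _).symm

lemma hprob_nonneg (hp0 : 0 ≤ p) (hp1 : p ≤ 1) (P : Finset (Edge d n) → Prop) :
    0 ≤ hprob d n p P := by
  rw [hprob_eq_sum_filter]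
  exact sum_nonneg fun H _ => hweight_nonneg hp0 hp1 H

lemma hprob_mono (hp0 : 0 ≤ p) (hp1 : p ≤ 1) {P Q : Finset (Edge d n) → Prop}
    (h : ∀ H, P H → Q H) : hprob d n p P ≤ hprob d n p Q := by
  rw [hprob_eq_sum_filter, hprob_eq_sum_filter]
  exact sum_le_sum_of_subset_of_nonneg (monotone_filter_right _ fun H _ => h H)
    fun H _ _ => hweight_nonneg hp0 hp1 H

lemma hprob_add_hprob_not (P : Finset (Edge d n) → Prop) :
    hprob d n p P + hprob d n p (fun H => ¬ P H) = 1 := by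
  rw [hprob_eq_sum_filter, hprob_eq_sum_filter, sum_filter_add_sum_filter_not]
  simpa [hweight, ← card_univ, powerset_univ] using
    sum_pow_mul_eq_add_pow p (1 - p) (univ : Finset (Edge d n))

lemma hprob_exists_le_sum (hp0 : 0 ≤ p) (hp1 : p ≤ 1) {ι : Type*} (I : Finset ι)
    (P : ι → Finset (Edge d n) → Prop) :
    hprob d n p (fun H => ∃ i ∈ I, P i H) ≤ ∑ i ∈ I, hprob d n p (P i) := by
  unfold hprob
  rw [sum_comm]
  refine sum_le_sum fun H _ => ?_
  have hterm : ∀ i, 0 ≤ if P i H then hweight d n p H else 0 := fun i => by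
    split_ifs
    exacts [hweight_nonneg hp0 hp1 H, le_rfl]
  split_ifs with hex
  · obtain ⟨i, hi, hPi⟩ := hex
    exact (if_pos hPi).symm.le.trans (single_le_sum (fun j _ => hterm j) hi)
  · exact sum_nonneg fun i _ => hterm i

lemma hprob_disjoint (B : Finset (Edge d n)) :
    hprob d n p (fun H => Disjoint H B) = (1 - p) ^ B.card := by
  have hcard : Fintype.card (Edge d n) = B.card + (univ \ B).card := by
    rw [card_univ_sdiff, Nat.add_sub_cancel' (card_le_univ B)]
  have hweight_eq : ∀ H ∈ (univ \ B).powerset, hweight d n p H =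
      (1 - p) ^ B.card * (p ^ H.card * (1 - p) ^ ((univ \ B).card - H.card)) := by
    intro H hH
    rw [hweight, hcard, Nat.add_sub_assoc (card_le_card (mem_powerset.1 hH)), pow_add]
    ring
  rw [hprob_eq_sum_filter, sum_congr (by ext H; simp [subset_sdiff]) hweight_eq, ← mul_sum,
    sum_pow_mul_eq_add_pow, add_sub_cancel, one_pow, mul_one]

end Probability

section Components
variable {d n : ℕ} {H : Finset (Edge d n)}

def AdjClosed (H : Finset (Edge d n)) (S : Finset (Fin n)) : Prop :=
  ∀ x ∈ S, ∀ y, eadj H x y → y ∈ S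

instance : Std.Symm (eadj H) :=
  ⟨fun _ _ ⟨hxy, e, he, hx, hy⟩ => ⟨hxy.symm, e, he, hy, hx⟩⟩

lemma mem_ecomp {x y : Fin n} : y ∈ ecomp H x ↔ Relation.ReflTransGen (eadj H) x y := by
  simp [ecomp]

lemma ecomp_eq_of_mem {x y : Fin n} (h : y ∈ ecomp H x) : ecomp H y = ecomp H x := by
  have hxy := mem_ecomp.1 h
  ext z
  simp only [mem_ecomp]
  exact ⟨hxy.trans, (Std.Symm.symm _ _ hxy).trans⟩

lemma disjoint_ecomp_of_ne {x y : Fin n} (h : ecomp H x ≠ ecomp H y) :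
    Disjoint (ecomp H x) (ecomp H y) :=
  disjoint_left.2 fun _ hx hy => h ((ecomp_eq_of_mem hx).symm.trans (ecomp_eq_of_mem hy))

lemma adjClosed_ecomp (x : Fin n) : AdjClosed H (ecomp H x) :=
  fun _ hy _ hyz => mem_ecomp.2 ((mem_ecomp.1 hy).tail hyz)

lemma AdjClosed.compl {S : Finset (Fin n)} (hS : AdjClosed H S) : AdjClosed H Sᶜ := by
  intro x hx y hxy
  rw [mem_compl] at hx ⊢
  exact fun hy => hx (hS y hy x (Std.Symm.symm _ _ hxy))

lemma card_ecomp_le_giantSize (x : Fin n) : (ecomp H x).card ≤ giantSize H :=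
  le_sup (f := fun y => (ecomp H y).card) (mem_univ x)

lemma pairwiseDisjoint_components :
    (↑(univ.image (ecomp H)) : Set (Finset (Fin n))).PairwiseDisjoint id := by
  simp only [coe_image, coe_univ, Set.image_univ]
  rintro _ ⟨x, rfl⟩ _ ⟨y, rfl⟩ hxy
  exact disjoint_ecomp_of_ne hxy

lemma sum_card_components : ∑ C ∈ univ.image (ecomp H), C.card = n := by
  have hcover : (univ.image (ecomp H)).biUnion id = univ :=
    eq_univ_of_forall fun x => mem_biUnion.2
      ⟨ecomp H x, mem_image_of_mem _ (mem_univ x), mem_ecomp.2 .refl⟩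
  calc ∑ C ∈ univ.image (ecomp H), C.card = ((univ.image (ecomp H)).biUnion id).card :=
        (card_biUnion pairwiseDisjoint_components).symm
    _ = n := by rw [hcover, card_univ, Fintype.card_fin]

lemma exists_subset_sum_mem_Ico {β : Type*} {s₀ : ℕ} (hs₀ : 0 < s₀) (F : Finset β) (w : β → ℕ)
    (hw : ∀ b ∈ F, w b < s₀) (htot : s₀ ≤ ∑ b ∈ F, w b) :
    ∃ G ⊆ F, s₀ ≤ ∑ b ∈ G, w b ∧ ∑ b ∈ G, w b < 2 * s₀ := by
  induction F using Finset.induction_on with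
  | empty => exact ⟨∅, empty_subset _, htot, by simpa using hs₀⟩
  | @insert a F ha ih =>
    have hwa := hw a (mem_insert_self a F)
    by_cases hF : s₀ ≤ ∑ b ∈ F, w b
    · obtain ⟨G, hG, hG₁, hG₂⟩ := ih (fun b hb => hw b (mem_insert_of_mem hb)) hF
      exact ⟨G, hG.trans (subset_insert a F), hG₁, hG₂⟩
    · rw [sum_insert ha] at htot
      exact ⟨insert a F, Subset.refl _, by rw [sum_insert ha]; omega, by rw [sum_insert ha]; omega⟩

lemma exists_adjClosed_of_card_ecomp_lt {s₀ : ℕ} (hs₀ : 0 < s₀) (hn : s₀ ≤ n)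
    (hsmall : ∀ x, (ecomp H x).card < s₀) :
    ∃ S : Finset (Fin n), AdjClosed H S ∧ s₀ ≤ S.card ∧ S.card < 2 * s₀ := by
  have hcomp : ∀ C ∈ univ.image (ecomp H), ∃ x, C = ecomp H x := by simp [eq_comm]
  obtain ⟨G, hG, hG₁, hG₂⟩ := exists_subset_sum_mem_Ico hs₀ (univ.image (ecomp H)) card
    (fun C hC => by obtain ⟨x, rfl⟩ := hcomp C hC; exact hsmall x)
    (sum_card_components.symm ▸ hn)
  have hcard : (G.biUnion id).card = ∑ C ∈ G, C.card :=
    card_biUnion (pairwiseDisjoint_components.subset (coe_subset.2 hG))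
  refine ⟨G.biUnion id, ?_, hcard ▸ hG₁, hcard ▸ hG₂⟩
  intro y hy z hyz
  obtain ⟨C, hC, hyC⟩ := mem_biUnion.1 hy
  obtain ⟨x, rfl⟩ := hcomp C (hG hC)
  exact mem_biUnion.2 ⟨_, hC, adjClosed_ecomp x y hyC z hyz⟩

lemma exists_adjClosed_of_le_mu {s₀ : ℕ} (hs₀ : 0 < s₀) (hn : 4 * s₀ ≤ n) (hmu : s₀ ≤ mu H) :
    ∃ S : Finset (Fin n), AdjClosed H S ∧ s₀ ≤ S.card ∧ 2 * S.card ≤ n := by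
  obtain ⟨x₀, -, hx₀⟩ := exists_mem_eq_sup (univ : Finset (Fin n))
    (univ_nonempty_iff.2 ⟨⟨0, by omega⟩⟩) fun x => (ecomp H x).card
  have hmu' : mu H = n - (ecomp H x₀).card := by rw [mu, giantSize, hx₀]
  have hgiant : (ecomp H x₀).card ≤ n := card_le_univ _ |>.trans_eq (Fintype.card_fin n)
  by_cases hhalf : 2 * mu H ≤ n
  · refine ⟨(ecomp H x₀)ᶜ, (adjClosed_ecomp x₀).compl, ?_, ?_⟩ <;>
      rw [card_compl, Fintype.card_fin] <;> omega
  by_cases hbig : s₀ ≤ (ecomp H x₀).card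
  · exact ⟨ecomp H x₀, adjClosed_ecomp x₀, hbig, by omega⟩
  obtain ⟨S, hS, hS₁, hS₂⟩ := exists_adjClosed_of_card_ecomp_lt (H := H) hs₀ (by omega)
    fun x => (card_ecomp_le_giantSize x).trans_lt (by rw [giantSize, hx₀]; omega)
  exact ⟨S, hS, hS₁, by omega⟩

end Components

section CrossEdges
variable {d n : ℕ}

def crossEdges (d n : ℕ) (S : Finset (Fin n)) : Finset (Edge d n) :=
  univ.filter fun e => (e.1 ∩ S).card = 1

lemma disjoint_crossEdges (hd : 1 ≤ d) {H : Finset (Edge d n)} {S : Finset (Fin n)}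
    (hS : AdjClosed H S) : Disjoint H (crossEdges d n S) := by
  refine disjoint_left.2 fun e he hcross => ?_
  obtain ⟨v, hv⟩ := card_eq_one.1 (mem_filter.1 hcross).2
  have hvS : v ∈ e.1 ∩ S := hv ▸ mem_singleton_self v
  have hsub : e.1 ⊆ S := fun y hy => by
    by_cases hyv : y = v
    · exact hyv ▸ (mem_inter.1 hvS).2
    · exact hS v (mem_inter.1 hvS).2 y ⟨Ne.symm hyv, e, he, (mem_inter.1 hvS).1, hy⟩
  have := (mem_filter.1 hcross).2
  rw [inter_eq_left.2 hsub, e.2] at this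
  omega

lemma card_crossEdges_ge (S : Finset (Fin n)) :
    S.card * (n - S.card).choose d ≤ (crossEdges d n S).card := by
  set T := (S ×ˢ Sᶜ.powersetCard d).image fun q => insert q.1 q.2
  have hmem : ∀ q ∈ S ×ˢ Sᶜ.powersetCard d,
      q.1 ∉ q.2 ∧ insert q.1 q.2 ∩ S = {q.1} ∧ (insert q.1 q.2).card = d + 1 := by
    intro q hq
    obtain ⟨hq₁, hq₂⟩ := mem_product.1 hq
    obtain ⟨hsub, hcard⟩ := mem_powersetCard.1 hq₂
    have hdisj : Disjoint q.2 S := disjoint_left.2 fun x hx => mem_compl.1 (hsub hx)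
    have hnot : q.1 ∉ q.2 := fun h => mem_compl.1 (hsub h) hq₁
    exact ⟨hnot, by rw [insert_inter_of_mem hq₁, disjoint_iff_inter_eq_empty.1 hdisj]; rfl,
      by rw [card_insert_of_notMem hnot, hcard]⟩
  have hinj : Set.InjOn (fun q : Fin n × Finset (Fin n) => insert q.1 q.2)
      (S ×ˢ Sᶜ.powersetCard d : Finset _) := by
    intro a ha b hb hab
    simp only at hab
    obtain ⟨ha₁, ha₂, -⟩ := hmem a ha
    obtain ⟨hb₁, hb₂, -⟩ := hmem b hb
    have hfst : a.1 = b.1 := singleton_injective (ha₂.symm.trans (hab ▸ hb₂ :))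
    refine Prod.ext hfst ?_
    have := congrArg (fun t => t.erase a.1) hab
    simp only [erase_insert ha₁] at this
    rwa [hfst, erase_insert hb₁] at this
  have hT : T ⊆ (crossEdges d n S).map (Function.Embedding.subtype _) := by
    intro t ht
    obtain ⟨q, hq, rfl⟩ := mem_image.1 ht
    obtain ⟨-, hq₂, hq₃⟩ := hmem q hq
    exact mem_map.2 ⟨⟨_, hq₃⟩, mem_filter.2 ⟨mem_univ _, by simp [hq₂]⟩, rfl⟩
  calc S.card * (n - S.card).choose d = T.card := by
        rw [card_image_of_injOn hinj, card_product, card_powersetCard, card_compl,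
          Fintype.card_fin]
    _ ≤ (crossEdges d n S).card := (card_le_card hT).trans_eq (card_map _)

end CrossEdges

section Estimates

lemma choose_le_exp_mul {n s : ℕ} (hn : 0 < n) (hs : 0 < s) :
    (n.choose s : ℝ) ≤ exp (s * (1 + log n - log s)) := by
  have hn' : (0 : ℝ) < n := by exact_mod_cast hn
  have hs' : (0 : ℝ) < s := by exact_mod_cast hs
  have hfact : (s : ℝ) ^ s / s.factorial ≤ exp s := pow_div_factorial_le_exp _ hs'.le s
  calc (n.choose s : ℝ) ≤ (n : ℝ) ^ s / s.factorial := Nat.choose_le_pow_div s n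
    _ = (n / s : ℝ) ^ s * ((s : ℝ) ^ s / s.factorial) := by rw [div_pow]; field_simp
    _ ≤ (n / s : ℝ) ^ s * exp s := by gcongr
    _ = exp (s * (1 + log n - log s)) := by
        rw [← exp_log (div_pos hn' hs'), ← exp_nat_mul, ← exp_add, log_div hn'.ne' hs'.ne']
        ring_nf

lemma sum_Icc_exp_neg_le (a b : ℕ) :
    ∑ s ∈ Icc a b, exp (-(s : ℝ)) ≤ 2 * exp (-(a : ℝ)) := by
  have hx : exp (-1) ≤ 1 / 2 := by
    rw [exp_neg, one_div]
    exact inv_anti₀ two_pos (by linarith [add_one_le_exp (1 : ℝ)])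
  have hpow : ∀ s : ℕ, exp (-(s : ℝ)) = exp (-1) ^ s := fun s => by
    rw [← exp_nat_mul]; ring_nf
  calc ∑ s ∈ Icc a b, exp (-(s : ℝ)) = ∑ s ∈ Ico a (b + 1), exp (-1) ^ s := by
        rw [← Ico_add_one_right_eq_Icc]; exact sum_congr rfl fun s _ => hpow s
    _ ≤ exp (-1) ^ a / (1 - exp (-1)) :=
        geom_sum_Ico_le_of_lt_one (exp_pos _).le (by linarith)
    _ ≤ 2 * exp (-(a : ℝ)) := by
        rw [hpow, div_le_iff₀ (by linarith)]
        nlinarith [pow_nonneg (exp_pos (-1)).le a]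

lemma one_sub_pow_le_exp_neg_mul {p : ℝ} (hp1 : p ≤ 1) (k : ℕ) :
    (1 - p) ^ k ≤ exp (-(p * k)) := by
  calc (1 - p) ^ k ≤ exp (-p) ^ k := pow_le_pow_left₀ (by linarith) (one_sub_le_exp_neg p) k
    _ = exp (-(p * k)) := by rw [← exp_nat_mul]; ring_nf

end Estimates

section FirstMoment
variable {d n : ℕ} {p : ℝ}

lemma hprob_disjoint_crossEdges_le (hp0 : 0 ≤ p) (hp1 : p ≤ 1) {S : Finset (Fin n)}
    (hS : 2 + log n - log S.card ≤ p * (n - S.card).choose d) :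
    hprob d n p (fun H => Disjoint H (crossEdges d n S)) ≤
      exp (-(S.card * (2 + log n - log S.card))) := by
  rw [hprob_disjoint]
  calc (1 - p) ^ (crossEdges d n S).card ≤ (1 - p) ^ (S.card * (n - S.card).choose d) :=
        pow_le_pow_of_le_one (by linarith) (by linarith) (card_crossEdges_ge S)
    _ ≤ exp (-(p * ↑(S.card * (n - S.card).choose d))) := one_sub_pow_le_exp_neg_mul hp1 _
    _ ≤ exp (-(S.card * (2 + log n - log S.card))) := by
        rw [exp_le_exp, neg_le_neg_iff, Nat.cast_mul, mul_left_comm]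
        exact mul_le_mul_of_nonneg_left hS (Nat.cast_nonneg _)

lemma sum_exp_neg_card_mul_le {s₀ : ℕ} (hs₀ : 0 < s₀) (𝒮 : Finset (Finset (Fin n)))
    (h𝒮 : ∀ S ∈ 𝒮, s₀ ≤ S.card) :
    ∑ S ∈ 𝒮, exp (-(S.card * (2 + log n - log S.card))) ≤ 2 * exp (-(s₀ : ℝ)) := by
  set g : ℕ → ℝ := fun s => exp (-(s * (2 + log n - log s)))
  have himage : 𝒮.image card ⊆ Icc s₀ n := fun s hs => by
    obtain ⟨S, hS, rfl⟩ := mem_image.1 hs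
    exact mem_Icc.2 ⟨h𝒮 S hS, (card_le_univ S).trans_eq (Fintype.card_fin n)⟩
  have hfiber : ∀ s, (𝒮.filter fun S => S.card = s).card ≤ n.choose s := fun s => by
    calc (𝒮.filter fun S => S.card = s).card ≤ (univ.powersetCard s).card :=
          card_le_card fun S hS => mem_powersetCard.2 ⟨subset_univ S, (mem_filter.1 hS).2⟩
      _ = n.choose s := by rw [card_powersetCard, card_univ, Fintype.card_fin]
  have hentropy : ∀ s ∈ Icc s₀ n, (n.choose s : ℝ) * g s ≤ exp (-(s : ℝ)) := fun s hs => by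
    obtain ⟨hs₁, hs₂⟩ := mem_Icc.1 hs
    calc (n.choose s : ℝ) * g s ≤ exp (s * (1 + log n - log s)) * g s :=
          mul_le_mul_of_nonneg_right (choose_le_exp_mul (by omega) (by omega)) (exp_pos _).le
      _ = exp (-(s : ℝ)) := by rw [← exp_add]; ring_nf
  calc ∑ S ∈ 𝒮, g S.card = ∑ s ∈ 𝒮.image card, (𝒮.filter fun S => S.card = s).card • g s :=
        sum_comp g card
    _ ≤ ∑ s ∈ 𝒮.image card, (n.choose s : ℝ) * g s := sum_le_sum fun s _ => by
        rw [nsmul_eq_mul]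
        exact mul_le_mul_of_nonneg_right (by exact_mod_cast hfiber s) (exp_pos _).le
    _ ≤ ∑ s ∈ 𝒮.image card, exp (-(s : ℝ)) := sum_le_sum fun s hs => hentropy s (himage hs)
    _ ≤ ∑ s ∈ Icc s₀ n, exp (-(s : ℝ)) :=
        sum_le_sum_of_subset_of_nonneg himage fun _ _ _ => (exp_pos _).le
    _ ≤ 2 * exp (-(s₀ : ℝ)) := sum_Icc_exp_neg_le s₀ n

theorem hprob_le_mu_le (hd : 1 ≤ d) (hp0 : 0 ≤ p) (hp1 : p ≤ 1) {s₀ : ℕ} (hs₀ : 0 < s₀)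
    (hn : 4 * s₀ ≤ n)
    (hdens : ∀ s, s₀ ≤ s → 2 * s ≤ n → 2 + log n - log s ≤ p * (n - s).choose d) :
    hprob d n p (fun H => s₀ ≤ mu H) ≤ 2 * exp (-(s₀ : ℝ)) := by
  set 𝒮 := (univ : Finset (Finset (Fin n))).filter fun S => s₀ ≤ S.card ∧ 2 * S.card ≤ n
  have hcut : ∀ H : Finset (Edge d n), s₀ ≤ mu H → ∃ S ∈ 𝒮, Disjoint H (crossEdges d n S) := by
    intro H hmu
    obtain ⟨S, hS, hS₁, hS₂⟩ := exists_adjClosed_of_le_mu hs₀ hn hmu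
    exact ⟨S, mem_filter.2 ⟨mem_univ S, hS₁, hS₂⟩, disjoint_crossEdges hd hS⟩
  calc hprob d n p (fun H => s₀ ≤ mu H)
      ≤ hprob d n p (fun H => ∃ S ∈ 𝒮, Disjoint H (crossEdges d n S)) := hprob_mono hp0 hp1 hcut
    _ ≤ ∑ S ∈ 𝒮, hprob d n p (fun H => Disjoint H (crossEdges d n S)) :=
        hprob_exists_le_sum hp0 hp1 𝒮 _
    _ ≤ ∑ S ∈ 𝒮, exp (-(S.card * (2 + log n - log S.card))) := sum_le_sum fun S hS => by
        obtain ⟨-, hS₁, hS₂⟩ := mem_filter.1 hS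
        exact hprob_disjoint_crossEdges_le hp0 hp1 (hdens S.card hS₁ hS₂)
    _ ≤ 2 * exp (-(s₀ : ℝ)) := sum_exp_neg_card_mul_le hs₀ 𝒮 fun S hS => (mem_filter.1 hS).2.1

end FirstMoment

section Density
variable {d n s : ℕ}

def logThreshold (d l : ℕ) (x : ℝ) : ℝ := (l * d * log x - l * log (log x)) / (1 + l * d)

lemma two_add_log_sub_log_le_of_le_mul_log {a Q : ℝ} (hL : 0 < log n)
    (hns : (n : ℝ) ≤ s * log n) (hQ : 1 / 3 ≤ Q) (ha0 : 0 ≤ a)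
    (ha : 3 ^ d * (2 + log (log n)) ≤ a) :
    2 + log n - log s ≤ a * Q ^ d := by
  have hn : (n : ℝ) ≠ 0 := fun h => by simp [h] at hL
  have hlog_s : log n - log (log n) ≤ log s := by
    rw [← log_div hn hL.ne']
    exact log_le_log (div_pos (lt_of_le_of_ne (Nat.cast_nonneg n) (Ne.symm hn)) hL)
      ((div_le_iff₀ hL).2 hns)
  have hQd : (1 / 3 : ℝ) ^ d ≤ Q ^ d := pow_le_pow_left₀ (by norm_num) hQ d
  have ha' : 2 + log (log n) ≤ a * (1 / 3) ^ d := by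
    rw [div_pow, one_pow, mul_one_div, le_div_iff₀ (by positivity)]
    linarith
  linarith [mul_le_mul_of_nonneg_left hQd ha0]

lemma two_add_log_sub_log_le_of_mul_log_lt {l : ℕ} {a Q : ℝ} (hL : 2 ≤ log n)
    (hdL : 4 * d ≤ log n) (hs₁ : 1 ≤ s) (hQ : 1 - 2 / log n ≤ Q) (ha0 : 0 ≤ a)
    (ha : (log n + l * log (log n)) / (1 + l * d) ≤ a)
    (hs : 2 + 8 * d + logThreshold d l n ≤ log s) :
    2 + log n - log s ≤ a * Q ^ d := by
  set L := log n
  have hL0 : 0 < L := by linarith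
  have hQd : 1 - 2 * d / L ≤ Q ^ d := by
    have hbern := one_add_mul_le_pow (a := -(2 / L)) (by linarith [div_le_one_of_le₀ hL hL0.le]) d
    have hmono := pow_le_pow_left₀ (by linarith [div_le_one_of_le₀ hL hL0.le]) hQ d
    calc 1 - 2 * d / L = 1 + d * -(2 / L) := by ring
      _ ≤ Q ^ d := hbern.trans (by rwa [← sub_eq_add_neg])
  have hhalf : 2 * d / L ≤ 1 / 2 := by rw [div_le_iff₀ hL0]; linarith
  by_cases hbig : 2 * (2 + L) ≤ a
  · have hlog_s : 0 ≤ log s := log_nonneg (by exact_mod_cast hs₁)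
    nlinarith [mul_le_mul_of_nonneg_left hQd ha0]
  have herr : a * (2 * d / L) ≤ 8 * d := by
    calc a * (2 * d / L) ≤ 2 * (2 + L) * (2 * d / L) :=
          mul_le_mul_of_nonneg_right (by linarith) (by positivity)
      _ = 8 * d - 4 * d * (L - 2) / L := by field_simp; ring
      _ ≤ 8 * d := by
          have : 0 ≤ 4 * d * (L - 2) / L := by
            apply div_nonneg _ hL0.le; apply mul_nonneg (by positivity); linarith
          linarith
  have hkey :
      2 + L - (2 + 8 * d + logThreshold d l n) = (L + l * log L) / (1 + l * d) - 8 * d := by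
    unfold logThreshold; field_simp; ring
  nlinarith [mul_le_mul_of_nonneg_left hQd ha0]

theorem two_add_log_sub_log_le_mul_choose {l : ℕ} {p : ℝ} (hd : 1 ≤ d) (hp0 : 0 ≤ p)
    (hdens : log n + l * log (log n) ≤ n ^ d * (1 + l * d) * p / d.factorial)
    (hdL : 6 * d ≤ log n) (hdn : d * log n ≤ n)
    (hLL : 3 ^ d * (1 + l * d) * (2 + log (log n)) ≤ log n)
    (hs₁ : 1 ≤ s) (hs₂ : 2 * s ≤ n) (hs : 2 + 8 * d + logThreshold d l n ≤ log s) :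
    2 + log n - log s ≤ p * (n - s).choose d := by
  set L := log n
  set a : ℝ := n ^ d * p / d.factorial
  set Q : ℝ := (n - s - d) / n
  have hd' : (1 : ℝ) ≤ d := by exact_mod_cast hd
  have hL : 6 ≤ L := by linarith
  have hn : 6 * d ≤ (n : ℝ) := by nlinarith
  have hn0 : (0 : ℝ) < n := by linarith
  have hs₂' : 2 * (s : ℝ) ≤ n := by exact_mod_cast hs₂
  have hld : (0 : ℝ) < 1 + l * d := by positivity
  have hLL0 : 0 ≤ log L := log_nonneg (by linarith)
  have ha0 : 0 ≤ a := by positivity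
  have ha : (L + l * log L) / (1 + l * d) ≤ a := by
    rw [div_le_iff₀ hld]
    calc L + l * log L ≤ n ^ d * (1 + l * d) * p / d.factorial := hdens
      _ = a * (1 + l * d) := by ring
  have hchoose : a * Q ^ d ≤ p * (n - s).choose d := by
    have hsd : d ≤ n - s := by
      have : (d : ℝ) + s ≤ n := by linarith
      exact Nat.le_sub_of_add_le (by exact_mod_cast this)
    have hcast : ((n - s + 1 - d : ℕ) : ℝ) = n - s + 1 - d := by
      rw [Nat.cast_sub (by omega), Nat.cast_add_one, Nat.cast_sub (by omega)]
    have hbase : ((n : ℝ) - s - d) ^ d / d.factorial ≤ (n - s).choose d := by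
      refine le_trans ?_ (Nat.pow_le_choose d (n - s))
      rw [hcast]
      gcongr
      · linarith
      · linarith
    calc a * Q ^ d = p * (((n : ℝ) - s - d) ^ d / d.factorial) := by
          simp only [a, Q, div_pow]; field_simp
      _ ≤ p * (n - s).choose d := mul_le_mul_of_nonneg_left hbase hp0
  refine le_trans ?_ hchoose
  -- Above `s = n / log n` the loss `log (n/s)` is at most `log log n`; below it
  -- `Q ≥ 1 - 2 / log n` and the bound on `log s` from the threshold takes over.
  by_cases hns : (n : ℝ) ≤ s * L
  · refine two_add_log_sub_log_le_of_le_mul_log (by linarith) hns ?_ ha0 ?_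
    · rw [le_div_iff₀ hn0]; linarith
    · refine le_trans ?_ ha
      rw [le_div_iff₀ hld]
      nlinarith [mul_nonneg (Nat.cast_nonneg l) hLL0]
  · refine two_add_log_sub_log_le_of_mul_log_lt (by linarith) (by linarith) hs₁ ?_ ha0 ha hs
    have hQ : Q - (1 - 2 / L) = (2 * n - s * L - d * L) / (n * L) := by
      simp only [Q]; field_simp; ring
    have : 0 ≤ Q - (1 - 2 / L) := by
      rw [hQ]; exact div_nonneg (by linarith) (by positivity)
    linarith

end Density

section Asymptotics
variable {d l : ℕ}

def muThreshold (d l : ℕ) (x : ℝ) : ℝ :=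
  x ^ ((l * d : ℝ) / (1 + l * d)) * log x ^ (-(l : ℝ) / (1 + l * d))

lemma one_le_log_natCast {n : ℕ} (hn : 3 ≤ n) : 1 ≤ log n := by
  rw [le_log_iff_exp_le (by positivity)]
  have : (3 : ℝ) ≤ n := by exact_mod_cast hn
  linarith [exp_one_lt_d9]

lemma tendsto_log_natCast_atTop : Tendsto (fun n : ℕ => log n) atTop atTop :=
  tendsto_log_atTop.comp tendsto_natCast_atTop_atTop

lemma muThreshold_eq_exp {x : ℝ} (hx : 1 < x) : muThreshold d l x = exp (logThreshold d l x) := by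
  rw [muThreshold, rpow_def_of_pos (by linarith), rpow_def_of_pos (log_pos hx), ← exp_add,
    logThreshold]
  congr 1
  field_simp
  ring

lemma logThreshold_nonneg (hd : 1 ≤ d) {x : ℝ} (hx : 1 ≤ log x) : 0 ≤ logThreshold d l x := by
  have hLL : log (log x) ≤ d * log x :=
    (log_le_sub_one_of_pos (by linarith)).trans
      (by nlinarith [(by exact_mod_cast hd : (1 : ℝ) ≤ d)])
  have h : 0 ≤ (l : ℝ) * (d * log x - log (log x)) := mul_nonneg (Nat.cast_nonneg l) (by linarith)
  exact div_nonneg (by linarith) (by positivity)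

lemma one_le_muThreshold (hd : 1 ≤ d) {n : ℕ} (hn : 3 ≤ n) : 1 ≤ muThreshold d l n := by
  rw [muThreshold_eq_exp (by exact_mod_cast (by omega : 1 < n))]
  exact one_le_exp (logThreshold_nonneg hd (one_le_log_natCast hn))

lemma tendsto_div_muThreshold (hd : 1 ≤ d) :
    Tendsto (fun n : ℕ => (n : ℝ) / muThreshold d l n) atTop atTop := by
  set α : ℝ := (l * d : ℝ) / (1 + l * d)
  have hα : α < 1 := by rw [div_lt_one (by positivity)]; linarith
  refine tendsto_atTop_mono' atTop ?_
    ((tendsto_rpow_atTop (sub_pos.2 hα)).comp tendsto_natCast_atTop_atTop)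
  filter_upwards [eventually_ge_atTop 3] with n hn
  have hn0 : (0 : ℝ) < n := by positivity
  have hL := one_le_log_natCast hn
  have hlog : log n ^ (-(l : ℝ) / (1 + l * d)) ≤ 1 :=
    rpow_le_one_of_one_le_of_nonpos hL (div_nonpos_of_nonpos_of_nonneg (by simp) (by positivity))
  calc (n : ℝ) ^ (1 - α) = n / n ^ α := by rw [rpow_sub hn0, rpow_one]
    _ ≤ n / muThreshold d l n := by
        refine div_le_div_of_nonneg_left hn0.le (by linarith [one_le_muThreshold (l := l) hd hn]) ?_
        exact (mul_le_of_le_one_right (rpow_nonneg hn0.le _) hlog)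

lemma eventually_le_of_isLittleO {α : Type*} {F : Filter α} {f g : α → ℝ} (h : f =o[F] g)
    (hg : ∀ᶠ x in F, 0 ≤ g x) : ∀ᶠ x in F, f x ≤ g x := by
  filter_upwards [h.def one_pos, hg] with x hx hgx
  rw [one_mul, norm_of_nonneg hgx] at hx
  exact (le_abs_self _).trans hx

lemma eventually_mul_log_le (c : ℝ) : ∀ᶠ n : ℕ in atTop, c * log n ≤ n :=
  eventually_le_of_isLittleO
    ((isLittleO_log_id_atTop.const_mul_left c).comp_tendsto tendsto_natCast_atTop_atTop)
    (.of_forall fun n => Nat.cast_nonneg n)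

lemma eventually_mul_two_add_log_log_le_log (C : ℝ) :
    ∀ᶠ n : ℕ in atTop, C * (2 + log (log n)) ≤ log n :=
  eventually_le_of_isLittleO
    ((((isLittleO_const_id_atTop (2 : ℝ)).add isLittleO_log_id_atTop).const_mul_left C).comp_tendsto
      tendsto_log_natCast_atTop)
    (tendsto_log_natCast_atTop.eventually_ge_atTop 0)

end Asymptotics

section Main
variable {d l : ℕ} {p : ℕ → ℝ}

lemma one_le_of_tendsto_atTop (hp1 : ∀ n, p n ≤ 1)
    (hcl : Tendsto (fun n : ℕ => (n : ℝ) ^ d * (1 + l * d) * p n / d.factorial -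
      log n - l * log (log n)) atTop atTop) : 1 ≤ d := by
  by_contra! hd
  obtain rfl : d = 0 := by omega
  obtain ⟨n, hn, hn3⟩ := ((hcl.eventually_ge_atTop 1).and (eventually_ge_atTop 3)).exists
  have hL := one_le_log_natCast hn3
  have hLL : 0 ≤ l * log (log n) := mul_nonneg (Nat.cast_nonneg l) (log_nonneg hL)
  simp only [pow_zero, CharP.cast_eq_zero, mul_zero, add_zero, Nat.factorial_zero,
    Nat.cast_one, div_one, one_mul] at hn
  linarith [hp1 n]

lemma eventually_mul_muThreshold_le_min (hd : 1 ≤ d) {f : ℕ → ℝ}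
    (hf : Tendsto (fun n => f n / muThreshold d l n) atTop atTop) (C : ℝ) :
    ∀ᶠ n : ℕ in atTop, C * muThreshold d l n ≤ min (f n) (n / 8) := by
  have h8 : Tendsto (fun n : ℕ => (n / 8 : ℝ) / muThreshold d l n) atTop atTop := by
    refine ((tendsto_div_muThreshold (l := l) hd).atTop_div_const
      (by norm_num : (0 : ℝ) < 8)).congr fun n => ?_
    ring
  filter_upwards [hf.eventually_ge_atTop C, h8.eventually_ge_atTop C, eventually_ge_atTop 3]
    with n hfn h8n hn
  have hthr : 0 < muThreshold d l n := one_pos.trans_le (one_le_muThreshold hd hn)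
  exact le_min ((le_div_iff₀ hthr).1 hfn) ((le_div_iff₀ hthr).1 h8n)

lemma tendsto_natCeil_atTop (hd : 1 ≤ d) {m : ℕ → ℝ}
    (hm : ∀ C, ∀ᶠ n : ℕ in atTop, C * muThreshold d l n ≤ m n) :
    Tendsto (fun n => ⌈m n⌉₊) atTop atTop := by
  refine tendsto_atTop.2 fun b => ?_
  filter_upwards [hm b, eventually_ge_atTop 3] with n hbm hn
  have hb : (b : ℝ) ≤ b * muThreshold d l n :=
    le_mul_of_one_le_right (Nat.cast_nonneg b) (one_le_muThreshold hd hn)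
  exact Nat.cast_le.1 ((hb.trans hbm).trans (Nat.le_ceil _))

lemma eventually_hprob_le_mu_le (hd : 1 ≤ d) (hp : ∀ n, 0 ≤ p n ∧ p n ≤ 1)
    (hcl : Tendsto (fun n : ℕ => (n : ℝ) ^ d * (1 + l * d) * p n / d.factorial -
      log n - l * log (log n)) atTop atTop)
    {m : ℕ → ℝ} (hm8 : ∀ n, m n ≤ n / 8)
    (hm : ∀ C, ∀ᶠ n : ℕ in atTop, C * muThreshold d l n ≤ m n) :
    ∀ᶠ n : ℕ in atTop,
      hprob d n (p n) (fun H => ⌈m n⌉₊ ≤ mu H) ≤ 2 * exp (-(⌈m n⌉₊ : ℝ)) := by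
  filter_upwards [hcl.eventually_ge_atTop 0,
    tendsto_log_natCast_atTop.eventually_ge_atTop (6 * d), eventually_mul_log_le d,
    eventually_mul_two_add_log_log_le_log (3 ^ d * (1 + l * d)), hm (exp (2 + 8 * d)),
    eventually_ge_atTop 8] with n hdens hdL hdn hLL hmn hn8
  have hm₀ : exp (2 + 8 * d + logThreshold d l n) ≤ m n := by
    rwa [exp_add, ← muThreshold_eq_exp (by exact_mod_cast (by omega : 1 < n))]
  have hs₀ : 0 < ⌈m n⌉₊ := Nat.ceil_pos.2 ((exp_pos _).trans_le hm₀)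
  have hn : 4 * ⌈m n⌉₊ ≤ n := by
    have hceil := Nat.ceil_lt_add_one ((exp_pos _).le.trans hm₀)
    have hn8' : (8 : ℝ) ≤ n := by exact_mod_cast hn8
    have : ((4 * ⌈m n⌉₊ : ℕ) : ℝ) < n + 1 := by
      push_cast; linarith [hm8 n]
    exact Nat.lt_add_one_iff.1 (by exact_mod_cast this)
  refine hprob_le_mu_le hd (hp n).1 (hp n).2 hs₀ hn fun s hs hs₂ => ?_
  refine two_add_log_sub_log_le_mul_choose hd (hp n).1 (by linarith) hdL hdn hLL
    (hs₀.trans_le hs) hs₂ ?_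
  rw [← log_exp (2 + 8 * d + logThreshold d l n)]
  exact log_le_log (exp_pos _) (hm₀.trans ((Nat.le_ceil _).trans (by exact_mod_cast hs)))

end Main

/-- Let `p` satisfy `c_l(n) = n^d(1+l*d)p/d! - log n - l log log n → +∞`. Then for any
`f(n) ≫ n^{l*d/(1+l*d)} (log n)^{-l/(1+l*d)}`, a.a.s. the number `μ` of vertices outside
the largest component satisfies `μ < f(n)`. -/
theorem stmt_17 (d l : ℕ) (p : ℕ → ℝ) (hp : ∀ n, 0 ≤ p n ∧ p n ≤ 1)
    (hcl : Tendsto (fun (n : ℕ) => (n : ℝ) ^ (d : ℕ) * (1 + l * d) * p n / Nat.factorial d -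
      Real.log n - l * Real.log (Real.log n)) atTop atTop)
    (f : ℕ → ℝ)
    (hf : Tendsto (fun n => f n /
        ((n : ℝ) ^ ((l * d : ℝ) / (1 + l * d)) * Real.log n ^ (-(l : ℝ) / (1 + l * d))))
      atTop atTop) :
    Tendsto (fun n => hprob d n (p n) fun H => (mu H : ℝ) < f n) atTop (nhds 1) := by
  have hd : 1 ≤ d := one_le_of_tendsto_atTop (fun n => (hp n).2) hcl
  -- The cap `n / 8` keeps `4 * ⌈m n⌉₊ ≤ n`, so that `μ ≥ ⌈m n⌉₊` yields a medium-sized union of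
  -- components.
  set m : ℕ → ℝ := fun n => min (f n) (n / 8)
  have hm := eventually_mul_muThreshold_le_min hd hf
  have hbound := eventually_hprob_le_mu_le hd hp hcl (m := m) (fun n => min_le_right _ _) hm
  have hexp : Tendsto (fun n => 2 * exp (-(⌈m n⌉₊ : ℝ))) atTop (nhds 0) := by
    simpa using ((tendsto_exp_neg_atTop_nhds_zero.comp tendsto_natCast_atTop_atTop).comp
      (tendsto_natCeil_atTop hd hm)).const_mul 2
  have hfail : Tendsto (fun n => hprob d n (p n) fun H => ¬ (mu H : ℝ) < f n) atTop (nhds 0) := by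
    refine squeeze_zero' (.of_forall fun n => hprob_nonneg (hp n).1 (hp n).2 _) ?_ hexp
    filter_upwards [hbound] with n hn
    refine (hprob_mono (hp n).1 (hp n).2 fun H hH => ?_).trans hn
    exact Nat.ceil_le.2 ((min_le_left _ _).trans (not_lt.1 hH))
  have hlim := (tendsto_const_nhds (x := (1 : ℝ))).sub hfail
  rw [sub_zero] at hlim
  exact hlim.congr fun n => (eq_sub_of_add_eq (hprob_add_hprob_not _)).symm
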